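/- Let X be a complete separable CAT(-1) space and G a countable group acting on X by isometries with countable discrete orbits. Then the horofunction compactification of X admits a Borel G-invariant partition into the set of horofunctions bounded from below and the set of horofunctions unbounded from below, and there is a G-equivariant Borel map from the bounded part to X, sending a bounded-below horofunction h to the circumcenter of the set of points of a fixed countable G-invariant dense-in-orbit set D where h is within 1 of its infimum. -/

import Mathlib

/-!
Comparison with the hyperbolic plane shows that in a CAT(-1) space the midpoint `m` of `[x, y]`
satisfies `cosh d(b, m) * cosh (d(x, y) / 2) ≤ (cosh d(x, b) + cosh d(y, b)) / 2` for every `b`.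
Applied to the farthest points of a nonempty bounded set `B`, this bounds `d(x, y)` by how much the
radii `sup_{b ∈ B} d(x, b)` and `sup_{b ∈ B} d(y, b)` exceed the circumradius. Hence approximate
centers form Cauchy sequences, the circumcenter exists, is unique, and is the limit of approximate
centers taken from a dense sequence, which makes it a measurable function of `B`.

Passing to the limit in the same inequality gives `e^{h m} cosh (d(x, y) / 2) ≤ e^{h x} + e^{h y}`
for every horofunction `h`, so the sublevel sets of a horofunction that is bounded below are
bounded. The action of `g` changes a horofunction by precomposition with `g⁻¹` and an additive
constant, so it moves its set of near-minimizers on the orbit by `g`, and circumcenters commute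
with isometries.
-/

open Metric Set

/-- `γ` is a unit-speed geodesic on the interval `[a,b]`. -/
def IsGeodesicOn {X : Type*} [MetricSpace X] (γ : ℝ → X) (a b : ℝ) : Prop :=
  ∀ s ∈ Set.Icc a b, ∀ t ∈ Set.Icc a b, dist (γ s) (γ t) = |s - t|

/-- `X` is a CAT(-1) space: geodesic, with triangles thinner than their comparison
triangles in the hyperbolic plane (`UpperHalfPlane`). -/
def IsCATMinusOne (X : Type*) [MetricSpace X] : Prop :=
  (∀ x y : X, ∃ γ : ℝ → X, γ 0 = x ∧ γ (dist x y) = y ∧ IsGeodesicOn γ 0 (dist x y)) ∧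
  (∀ (p q r : X) (γ₁ γ₂ : ℝ → X),
      γ₁ 0 = p → γ₁ (dist p q) = q → IsGeodesicOn γ₁ 0 (dist p q) →
      γ₂ 0 = p → γ₂ (dist p r) = r → IsGeodesicOn γ₂ 0 (dist p r) →
    ∀ (p' q' r' : UpperHalfPlane) (γ₁' γ₂' : ℝ → UpperHalfPlane),
      dist p' q' = dist p q → dist p' r' = dist p r → dist q' r' = dist q r →
      γ₁' 0 = p' → γ₁' (dist p q) = q' → IsGeodesicOn γ₁' 0 (dist p q) →
      γ₂' 0 = p' → γ₂' (dist p r) = r' → IsGeodesicOn γ₂' 0 (dist p r) →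
      ∀ s ∈ Set.Icc 0 (dist p q), ∀ t ∈ Set.Icc 0 (dist p r),
        dist (γ₁ s) (γ₂ t) ≤ dist (γ₁' s) (γ₂' t))

/-- The circumradius of a subset. -/
noncomputable def circumradius {X : Type*} [MetricSpace X] (B : Set X) : ℝ :=
  sInf {r : ℝ | 0 ≤ r ∧ ∃ x : X, B ⊆ closedBall x r}

/-- The circumcenter of a subset (well defined for nonempty closed bounded subsets of a
complete CAT(0) space). -/
noncomputable def circumcenter {X : Type*} [MetricSpace X] [Nonempty X] (B : Set X) : X :=
  Classical.epsilon fun x : X => B ⊆ closedBall x (circumradius B)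

/-- The embedding of `X` into `C(X,ℝ)` used to define the horofunction
compactification: `x ↦ (z ↦ d(z,x) − d(x₀,x))`. -/
noncomputable def iotaMap {X : Type*} [MetricSpace X] (x₀ : X) (x : X) : C(X, ℝ) :=
  ⟨fun z => dist z x - dist x₀ x, (continuous_id.dist continuous_const).sub continuous_const⟩

/-- The horofunction compactification of `X` (based at `x₀`): the closure of the image
of `iotaMap x₀` in `C(X,ℝ)` with the topology of uniform convergence on compacta. -/
noncomputable def HoroSet {X : Type*} [MetricSpace X] (x₀ : X) : Set C(X, ℝ) :=
  closure (Set.range (iotaMap x₀))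

open Real Filter Topology Bornology TopologicalSpace
open scoped MatrixGroups Pointwise

lemma Real.le_arcosh_of_cosh_le {a b : ℝ} (ha : 0 ≤ a) (h : cosh a ≤ b) : a ≤ arcosh b := by
  rw [← arcosh_cosh ha]
  exact (arcosh_le_arcosh (cosh_pos a) ((cosh_pos a).trans_le h)).2 h

lemma Real.cosh_le_cosh_of_le {a b : ℝ} (ha : 0 ≤ a) (hab : a ≤ b) : cosh a ≤ cosh b :=
  cosh_le_cosh.2 <| by rwa [abs_of_nonneg ha, abs_of_nonneg (ha.trans hab)]

lemma Real.one_add_sq_div_two_le_cosh (x : ℝ) : 1 + x ^ 2 / 2 ≤ cosh x := by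
  have hsinh : |x| / 2 ≤ sinh (|x| / 2) := self_le_sinh_iff.2 (by positivity)
  have hcosh : cosh |x| = 1 + 2 * sinh (|x| / 2) ^ 2 := by
    have := cosh_two_mul (|x| / 2)
    rw [mul_div_cancel₀ _ two_ne_zero, cosh_sq'] at this
    linarith
  rw [← cosh_abs, hcosh, ← sq_abs]
  nlinarith [abs_nonneg x]

namespace UpperHalfPlane

noncomputable def verticalPoint (s : ℝ) : ℍ := ⟨⟨0, exp s⟩, exp_pos s⟩

lemma dist_verticalPoint (s t : ℝ) : dist (verticalPoint s) (verticalPoint t) = |s - t| :=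
  ((isometry_vertical_line 0).dist_eq s t).trans (Real.dist_eq s t)

lemma coe_verticalPoint (s : ℝ) : (verticalPoint s : ℂ) = exp s * Complex.I := by
  apply Complex.ext <;> simp [verticalPoint, -Complex.ofReal_exp]

lemma cosh_dist_verticalPoint (w : ℍ) (s : ℝ) :
    cosh (dist w (verticalPoint s)) = (w.re ^ 2 + w.im ^ 2 + exp s ^ 2) / (2 * w.im * exp s) := by
  rw [cosh_dist']
  simp [verticalPoint]

lemma cosh_dist_verticalPoint_half_mul (w : ℍ) (L : ℝ) :
    cosh (dist w (verticalPoint (L / 2))) * cosh (L / 2) =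
      (cosh (dist w (verticalPoint 0)) + cosh (dist w (verticalPoint L))) / 2 := by
  have hL : exp L = exp (L / 2) * exp (L / 2) := by rw [← exp_add, add_halves]
  rw [cosh_dist_verticalPoint, cosh_dist_verticalPoint, cosh_dist_verticalPoint, cosh_eq,
    exp_zero, exp_neg, hL]
  have := w.im_pos
  field_simp
  ring

/-- The hyperbolic rotation by the angle `2θ` about `i`. -/
noncomputable def rotation (θ : ℝ) : SL(2, ℝ) :=
  ⟨!![cos θ, sin θ; -sin θ, cos θ], by simp [Matrix.det_fin_two_of, ← sq]⟩

lemma continuous_rotation : Continuous rotation :=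
  continuous_induced_rng.2 <| continuous_matrix fun i j => by
    fin_cases i <;> fin_cases j <;> simp <;> fun_prop

lemma coe_rotation_smul (θ : ℝ) (z : ℍ) :
    ((rotation θ • z : ℍ) : ℂ) = (cos θ * z + sin θ) / (-sin θ * z + cos θ) := by
  rw [coe_specialLinearGroup_apply]
  simp [rotation]

lemma rotation_smul_verticalPoint_zero (θ : ℝ) :
    rotation θ • verticalPoint 0 = verticalPoint 0 := by
  have hI : (verticalPoint 0 : ℂ) = Complex.I := by simp [coe_verticalPoint]
  have hden : -(sin θ : ℂ) * Complex.I + cos θ ≠ 0 := by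
    intro h
    have h₁ := congrArg Complex.re h
    have h₂ := congrArg Complex.im h
    simp only [Complex.add_re, Complex.add_im, Complex.zero_re, Complex.zero_im, Complex.neg_re,
      Complex.neg_im, Complex.mul_re, Complex.mul_im, Complex.I_re, Complex.I_im,
      Complex.ofReal_re, Complex.ofReal_im] at h₁ h₂
    nlinarith [sin_sq_add_cos_sq θ]
  ext1
  rw [coe_rotation_smul, hI, div_eq_iff hden]
  linear_combination (sin θ : ℂ) * Complex.I_sq

lemma rotation_zero_smul (z : ℍ) : rotation 0 • z = z := by
  ext1
  simp [coe_rotation_smul]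

lemma rotation_pi_div_two_smul_verticalPoint (s : ℝ) :
    rotation (π / 2) • verticalPoint s = verticalPoint (-s) := by
  have h : Complex.exp (-s) * Complex.exp s = 1 := by rw [← Complex.exp_add]; simp
  ext1
  simp only [coe_rotation_smul, cos_pi_div_two, sin_pi_div_two, coe_verticalPoint,
    Complex.ofReal_exp, Complex.ofReal_neg, Complex.ofReal_zero, Complex.ofReal_one]
  rw [div_eq_iff (by simp [Complex.exp_ne_zero])]
  linear_combination (Complex.exp (-s) * Complex.exp s) * Complex.I_sq - h

/-- Intermediate value theorem between `θ = 0`, where the third side is `|A - L|`, and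
`θ = π / 2`, where it is `A + L`. -/
lemma exists_dist_rotation_smul_verticalPoint {L A B : ℝ} (hA : 0 ≤ A) (hL : 0 ≤ L)
    (hB₁ : |A - L| ≤ B) (hB₂ : B ≤ A + L) :
    ∃ θ, dist (rotation θ • verticalPoint A) (verticalPoint L) = B := by
  have hcont : Continuous fun θ => dist (rotation θ • verticalPoint A) (verticalPoint L) :=
    (continuous_rotation.smul continuous_const).dist continuous_const
  have hmem : B ∈ Icc (dist (rotation 0 • verticalPoint A) (verticalPoint L))
      (dist (rotation (π / 2) • verticalPoint A) (verticalPoint L)) := by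
    rw [rotation_zero_smul, rotation_pi_div_two_smul_verticalPoint, dist_verticalPoint,
      dist_verticalPoint, show -A - L = -(A + L) by ring, abs_neg, abs_of_nonneg (add_nonneg hA hL)]
    exact ⟨hB₁, hB₂⟩
  obtain ⟨θ, -, hθ⟩ := intermediate_value_Icc pi_div_two_pos.le hcont.continuousOn hmem
  exact ⟨θ, hθ⟩

end UpperHalfPlane

open UpperHalfPlane in
/-- Compare with the triangle in `ℍ` with vertices `i`, `e^L i` and a rotated `e^A i`, for which
the inequality is the median identity `cosh_dist_verticalPoint_half_mul`. -/
lemma IsCATMinusOne.cosh_dist_midpoint_mul_le {X : Type*} [MetricSpace X] (hX : IsCATMinusOne X)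
    {x y : X} {γ : ℝ → X} (hγ₀ : γ 0 = x) (hγ₁ : γ (dist x y) = y)
    (hγ : IsGeodesicOn γ 0 (dist x y)) (b : X) :
    cosh (dist b (γ (dist x y / 2))) * cosh (dist x y / 2) ≤
      (cosh (dist x b) + cosh (dist y b)) / 2 := by
  set L := dist x y
  set A := dist x b
  obtain ⟨γ', hγ'₀, hγ'₁, hγ'⟩ := hX.1 x b
  have hL : 0 ≤ L := dist_nonneg
  have hA : 0 ≤ A := dist_nonneg
  obtain ⟨θ, hθ⟩ := exists_dist_rotation_smul_verticalPoint (B := dist y b) hA hL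
    (abs_sub_le_iff.2 ⟨by linarith [dist_triangle x y b], by
      linarith [dist_triangle x b y, dist_comm b y]⟩)
    (by linarith [dist_triangle y x b, dist_comm x y])
  set r := rotation θ • verticalPoint A
  have hpr : dist (verticalPoint 0) r = A := by
    rw [← rotation_smul_verticalPoint_zero θ, dist_smul, dist_verticalPoint, zero_sub, abs_neg,
      abs_of_nonneg hA]
  have hcomp := hX.2 x y b γ γ' hγ₀ hγ₁ hγ hγ'₀ hγ'₁ hγ'
    (verticalPoint 0) (verticalPoint L) r verticalPoint (fun t => rotation θ • verticalPoint t)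
    (by rw [dist_verticalPoint, zero_sub, abs_neg, abs_of_nonneg hL]) hpr
    (by rw [dist_comm, hθ]) rfl rfl (fun s _ t _ => dist_verticalPoint s t)
    (rotation_smul_verticalPoint_zero θ) rfl
    (fun s _ t _ => by simp only [dist_smul, dist_verticalPoint])
    (L / 2) ⟨by positivity, by linarith⟩ A ⟨hA, le_rfl⟩
  rw [hγ'₁, dist_comm] at hcomp
  calc cosh (dist b (γ (L / 2))) * cosh (L / 2)
      ≤ cosh (dist r (verticalPoint (L / 2))) * cosh (L / 2) := by
        gcongr
        exact cosh_le_cosh_of_le dist_nonneg (by rwa [dist_comm r])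
    _ = (cosh A + cosh (dist y b)) / 2 := by
        rw [cosh_dist_verticalPoint_half_mul, dist_comm r (verticalPoint 0), hpr, hθ]

/-- The midpoint inequality that CAT(-1) spaces inherit from the hyperbolic plane. -/
def HasCoshMidpoints (X : Type*) [MetricSpace X] : Prop :=
  ∀ x y : X, ∃ m : X, ∀ b : X,
    cosh (dist b m) * cosh (dist x y / 2) ≤ (cosh (dist x b) + cosh (dist y b)) / 2

lemma IsCATMinusOne.hasCoshMidpoints {X : Type*} [MetricSpace X] (hX : IsCATMinusOne X) :
    HasCoshMidpoints X := fun x y =>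
  let ⟨_, hγ₀, hγ₁, hγ⟩ := hX.1 x y
  ⟨_, hX.cosh_dist_midpoint_mul_le hγ₀ hγ₁ hγ⟩

section Circumcenter

variable {X : Type*} [MetricSpace X] {B : Set X}

noncomputable def supDist (x : X) (B : Set X) : ℝ := sSup ((dist x ·) '' B)

lemma supDist_nonneg (x : X) (B : Set X) : 0 ≤ supDist x B :=
  Real.sSup_nonneg <| by rintro _ ⟨b, -, rfl⟩; exact dist_nonneg

lemma dist_le_supDist (hbd : IsBounded B) (x : X) {b : X} (hb : b ∈ B) :
    dist x b ≤ supDist x B := by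
  obtain ⟨C, hC⟩ := hbd.subset_closedBall x
  refine le_csSup ⟨C, ?_⟩ ⟨b, hb, rfl⟩
  rintro _ ⟨c, hc, rfl⟩
  simpa [dist_comm] using hC hc

lemma supDist_le_iff (hne : B.Nonempty) (hbd : IsBounded B) {x : X} {r : ℝ} :
    supDist x B ≤ r ↔ ∀ b ∈ B, dist x b ≤ r :=
  ⟨fun h _ hb => (dist_le_supDist hbd x hb).trans h,
    fun h => csSup_le (hne.image _) <| by rintro _ ⟨b, hb, rfl⟩; exact h b hb⟩

lemma subset_closedBall_iff_supDist_le (hne : B.Nonempty) (hbd : IsBounded B) {x : X} {r : ℝ} :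
    B ⊆ closedBall x r ↔ supDist x B ≤ r := by
  simp only [supDist_le_iff hne hbd, subset_def, mem_closedBall, dist_comm x]

lemma lipschitzWith_supDist (hne : B.Nonempty) (hbd : IsBounded B) :
    LipschitzWith 1 (supDist · B) :=
  LipschitzWith.of_le_add fun x y => (supDist_le_iff hne hbd).2 fun b hb => by
    linarith [dist_triangle x y b, dist_le_supDist hbd y hb]

lemma circumradius_eq_iInf_supDist (hne : B.Nonempty) (hbd : IsBounded B) :
    circumradius B = ⨅ x, supDist x B := by
  have : Nonempty X := ⟨hne.some⟩
  have hbdd : BddBelow (range (supDist · B)) :=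
    ⟨0, by rintro _ ⟨x, rfl⟩; exact supDist_nonneg x B⟩
  apply le_antisymm
  · refine le_ciInf fun x => csInf_le ⟨0, fun r hr => hr.1⟩ ⟨supDist_nonneg x B, x, ?_⟩
    exact (subset_closedBall_iff_supDist_le hne hbd).2 le_rfl
  · obtain ⟨C, hC⟩ := hbd.subset_closedBall hne.some
    refine le_csInf ⟨max C 0, le_max_right _ _, hne.some,
      hC.trans (closedBall_subset_closedBall (le_max_left _ _))⟩ ?_
    rintro r ⟨-, x, hx⟩
    exact (ciInf_le hbdd x).trans ((subset_closedBall_iff_supDist_le hne hbd).1 hx)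

lemma circumradius_le_supDist (hne : B.Nonempty) (hbd : IsBounded B) (x : X) :
    circumradius B ≤ supDist x B := by
  rw [circumradius_eq_iInf_supDist hne hbd]
  exact ciInf_le ⟨0, by rintro _ ⟨y, rfl⟩; exact supDist_nonneg y B⟩ x

lemma circumradius_nonneg (B : Set X) : 0 ≤ circumradius B :=
  Real.sInf_nonneg fun _ hr => hr.1

lemma circumradius_eq_iInf_supDist_denseRange (hne : B.Nonempty) (hbd : IsBounded B)
    {q : ℕ → X} (hq : DenseRange q) : ⨅ k, supDist (q k) B = circumradius B := by
  rw [circumradius_eq_iInf_supDist hne hbd,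
    ← hq.ciInf' (lipschitzWith_supDist hne hbd).continuous]
  exact (iInf_range' (supDist · B) q).symm

lemma circumradius_image_isometryEquiv (e : X ≃ᵢ X) (B : Set X) :
    circumradius (e '' B) = circumradius B := by
  unfold circumradius
  congr 1
  ext r
  rw [mem_ofPred_eq, mem_ofPred_eq, e.surjective.exists]
  simp only [← e.image_closedBall, image_subset_image_iff e.injective]

/-- Nonnegative, and zero exactly at the centers of the closed balls of radius `circumradius B`
containing `B`. -/
noncomputable def coshExcess (B : Set X) (x : X) : ℝ :=
  cosh (supDist x B) / cosh (circumradius B) - 1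

lemma coshExcess_eq_zero_of_subset_closedBall (hne : B.Nonempty) (hbd : IsBounded B) {x : X}
    (hx : B ⊆ closedBall x (circumradius B)) : coshExcess B x = 0 := by
  rw [coshExcess, le_antisymm ((subset_closedBall_iff_supDist_le hne hbd).1 hx)
    (circumradius_le_supDist hne hbd x), div_self (cosh_pos _).ne', sub_self]

lemma exists_seq_tendsto_supDist (hne : B.Nonempty) (hbd : IsBounded B) :
    ∃ u : ℕ → X, Tendsto (fun n => supDist (u n) B) atTop (𝓝 (circumradius B)) := by
  have : Nonempty X := ⟨hne.some⟩
  obtain ⟨v, -, hv, hvS⟩ := exists_seq_tendsto_sInf (range_nonempty (supDist · B))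
    ⟨0, by rintro _ ⟨x, rfl⟩; exact supDist_nonneg x B⟩
  choose u hu using hvS
  rw [circumradius_eq_iInf_supDist hne hbd]
  exact ⟨u, hv.congr fun n => (hu n).symm⟩

namespace HasCoshMidpoints

lemma cosh_half_dist_mul_cosh_circumradius_le (hX : HasCoshMidpoints X) (hne : B.Nonempty)
    (hbd : IsBounded B) (x y : X) :
    cosh (dist x y / 2) * cosh (circumradius B) ≤
      (cosh (supDist x B) + cosh (supDist y B)) / 2 := by
  obtain ⟨m, hm⟩ := hX x y
  set T := (cosh (supDist x B) + cosh (supDist y B)) / 2 with hT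
  have hc := cosh_pos (dist x y / 2)
  have hmB : ∀ b ∈ B, cosh (dist m b) ≤ T / cosh (dist x y / 2) := fun b hb => by
    rw [le_div_iff₀ hc, dist_comm]
    linarith [hm b, hT, cosh_le_cosh_of_le dist_nonneg (dist_le_supDist hbd x hb),
      cosh_le_cosh_of_le dist_nonneg (dist_le_supDist hbd y hb)]
  have hR : circumradius B ≤ arcosh (T / cosh (dist x y / 2)) :=
    (circumradius_le_supDist hne hbd m).trans <| (supDist_le_iff hne hbd).2
      fun b hb => le_arcosh_of_cosh_le dist_nonneg (hmB b hb)
  have hT₁ : 1 ≤ T / cosh (dist x y / 2) := (one_le_cosh _).trans (hmB _ hne.some_mem)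
  calc cosh (dist x y / 2) * cosh (circumradius B)
      ≤ cosh (dist x y / 2) * (T / cosh (dist x y / 2)) := by
        gcongr
        rw [← cosh_arcosh hT₁]
        exact cosh_le_cosh_of_le (circumradius_nonneg B) hR
    _ = T := mul_div_cancel₀ T hc.ne'

lemma dist_sq_le_coshExcess (hX : HasCoshMidpoints X) (hne : B.Nonempty) (hbd : IsBounded B)
    (x y : X) : dist x y ^ 2 ≤ 4 * (coshExcess B x + coshExcess B y) := by
  have hkey := hX.cosh_half_dist_mul_cosh_circumradius_le hne hbd x y
  have hquad := one_add_sq_div_two_le_cosh (dist x y / 2)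
  have hR := cosh_pos (circumradius B)
  have h : dist x y ^ 2 * cosh (circumradius B) ≤
      4 * (cosh (supDist x B) + cosh (supDist y B)) - 8 * cosh (circumradius B) := by
    nlinarith
  have hrw : 4 * (coshExcess B x + coshExcess B y) = (4 * (cosh (supDist x B) +
      cosh (supDist y B)) - 8 * cosh (circumradius B)) / cosh (circumradius B) := by
    unfold coshExcess
    field_simp
    ring
  rwa [hrw, le_div_iff₀ hR]

lemma cauchySeq_of_tendsto_supDist (hX : HasCoshMidpoints X) (hne : B.Nonempty)
    (hbd : IsBounded B) {u : ℕ → X}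
    (hu : Tendsto (fun n => supDist (u n) B) atTop (𝓝 (circumradius B))) : CauchySeq u := by
  have he : Tendsto (fun n => coshExcess B (u n)) atTop (𝓝 0) := by
    have := ((continuous_cosh.tendsto _).comp hu).div_const (cosh (circumradius B)) |>.sub_const 1
    rwa [div_self (cosh_pos _).ne', sub_self] at this
  rw [Metric.cauchySeq_iff']
  intro ε hε
  obtain ⟨N, hN⟩ :=
    eventually_atTop.1 (he.eventually (gt_mem_nhds (by positivity : 0 < ε ^ 2 / 8)))
  refine ⟨N, fun n hn => lt_of_pow_lt_pow_left₀ 2 hε.le ?_⟩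
  linarith [hX.dist_sq_le_coshExcess hne hbd (u n) (u N), hN n hn, hN N le_rfl]

lemma exists_tendsto_subset_closedBall [CompleteSpace X] (hX : HasCoshMidpoints X)
    (hne : B.Nonempty) (hbd : IsBounded B) {u : ℕ → X}
    (hu : Tendsto (fun n => supDist (u n) B) atTop (𝓝 (circumradius B))) :
    ∃ z, Tendsto u atTop (𝓝 z) ∧ B ⊆ closedBall z (circumradius B) := by
  obtain ⟨z, hz⟩ := cauchySeq_tendsto_of_complete (hX.cauchySeq_of_tendsto_supDist hne hbd hu)
  refine ⟨z, hz, (subset_closedBall_iff_supDist_le hne hbd).2 (le_of_eq ?_)⟩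
  exact tendsto_nhds_unique (((lipschitzWith_supDist hne hbd).continuous.tendsto z).comp hz) hu

lemma eq_of_subset_closedBall (hX : HasCoshMidpoints X) (hne : B.Nonempty) (hbd : IsBounded B)
    {y z : X} (hy : B ⊆ closedBall y (circumradius B))
    (hz : B ⊆ closedBall z (circumradius B)) : y = z := by
  have := hX.dist_sq_le_coshExcess hne hbd y z
  rw [coshExcess_eq_zero_of_subset_closedBall hne hbd hy,
    coshExcess_eq_zero_of_subset_closedBall hne hbd hz] at this
  exact dist_le_zero.1 (by nlinarith [dist_nonneg (x := y) (y := z)])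

variable [CompleteSpace X] [Nonempty X]

lemma subset_closedBall_circumcenter (hX : HasCoshMidpoints X) (hne : B.Nonempty)
    (hbd : IsBounded B) : B ⊆ closedBall (circumcenter B) (circumradius B) := by
  obtain ⟨u, hu⟩ := exists_seq_tendsto_supDist hne hbd
  obtain ⟨z, -, hz⟩ := hX.exists_tendsto_subset_closedBall hne hbd hu
  exact Classical.epsilon_spec (p := fun x => B ⊆ closedBall x (circumradius B)) ⟨z, hz⟩

lemma eq_circumcenter (hX : HasCoshMidpoints X) (hne : B.Nonempty) (hbd : IsBounded B) {z : X}
    (hz : B ⊆ closedBall z (circumradius B)) : z = circumcenter B :=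
  hX.eq_of_subset_closedBall hne hbd hz (hX.subset_closedBall_circumcenter hne hbd)

lemma tendsto_circumcenter (hX : HasCoshMidpoints X) (hne : B.Nonempty) (hbd : IsBounded B)
    {u : ℕ → X} (hu : Tendsto (fun n => supDist (u n) B) atTop (𝓝 (circumradius B))) :
    Tendsto u atTop (𝓝 (circumcenter B)) := by
  obtain ⟨z, hzu, hz⟩ := hX.exists_tendsto_subset_closedBall hne hbd hu
  rwa [← hX.eq_circumcenter hne hbd hz]

lemma circumcenter_image_isometryEquiv (hX : HasCoshMidpoints X) (hne : B.Nonempty)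
    (hbd : IsBounded B) (e : X ≃ᵢ X) : circumcenter (e '' B) = e (circumcenter B) := by
  refine (hX.eq_circumcenter (hne.image e) (e.isometry.lipschitz.isBounded_image hbd) ?_).symm
  rw [circumradius_image_isometryEquiv, ← e.image_closedBall]
  exact image_mono (hX.subset_closedBall_circumcenter hne hbd)

end HasCoshMidpoints

end Circumcenter

section Measurability

variable {Ω X : Type*} [MeasurableSpace Ω] [MetricSpace X]

lemma measurable_supDist_of_subset_countable {D : Set X} (hD : D.Countable) {B : Ω → Set X}
    (hBD : ∀ ω, B ω ⊆ D) (hmem : ∀ d ∈ D, MeasurableSet {ω | d ∈ B ω})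
    (hne : ∀ ω, (B ω).Nonempty) (hbd : ∀ ω, IsBounded (B ω)) (x : X) :
    Measurable fun ω => supDist x (B ω) := by
  refine measurable_of_Iic fun a => ?_
  have : (fun ω => supDist x (B ω)) ⁻¹' Iic a =
      ⋂ d ∈ D, ({ω | d ∈ B ω}ᶜ ∪ {_ω | dist x d ≤ a}) := by
    ext ω
    simp only [mem_preimage, mem_Iic, supDist_le_iff (hne ω) (hbd ω), mem_iInter, mem_union,
      mem_compl_iff, mem_ofPred_eq]
    exact ⟨fun h d _ => or_iff_not_imp_left.2 fun hd => h d (not_not.1 hd),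
      fun h b hb => (h b (hBD ω hb)).resolve_left (not_not.2 hb)⟩
  rw [this]
  exact .biInter hD fun d hd => (hmem d hd).compl.union (.const _)

variable [CompleteSpace X] [Nonempty X] [SeparableSpace X] [MeasurableSpace X] [BorelSpace X]

theorem HasCoshMidpoints.measurable_circumcenter (hX : HasCoshMidpoints X) {B : Ω → Set X}
    (hne : ∀ ω, (B ω).Nonempty) (hbd : ∀ ω, IsBounded (B ω))
    (hmeas : ∀ x, Measurable fun ω => supDist x (B ω)) :
    Measurable fun ω => circumcenter (B ω) := by
  classical
  set q := denseSeq X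
  have hρ : ∀ ω, ⨅ k, supDist (q k) (B ω) = circumradius (B ω) := fun ω =>
    circumradius_eq_iInf_supDist_denseRange (hne ω) (hbd ω) (denseRange_denseSeq X)
  have hρm : Measurable fun ω => circumradius (B ω) := by
    simp_rw [← hρ]
    exact .iInf fun k => hmeas (q k)
  have hex : ∀ (n : ℕ) ω, ∃ k, supDist (q k) (B ω) < circumradius (B ω) + 1 / (n + 1) :=
    fun n ω => exists_lt_of_ciInf_lt <| (hρ ω).trans_lt (lt_add_of_pos_right _ (by positivity))
  have hk : ∀ n, Measurable fun ω => Nat.find (hex n ω) := fun n =>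
    measurable_find (hex n) fun k => measurableSet_lt (hmeas (q k)) (hρm.add_const _)
  refine measurable_of_tendsto_metrizable' atTop (f := fun n ω => q (Nat.find (hex n ω)))
    (fun n => measurable_from_nat.comp (hk n)) (tendsto_pi_nhds.2 fun ω => ?_)
  refine hX.tendsto_circumcenter (hne ω) (hbd ω) <| tendsto_of_tendsto_of_tendsto_of_le_of_le
    tendsto_const_nhds ?_ (fun n => circumradius_le_supDist (hne ω) (hbd ω) _)
    (fun n => (Nat.find_spec (hex n ω)).le)
  simpa using tendsto_one_div_add_atTop_nhds_zero_nat.const_add (circumradius (B ω))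

end Measurability

lemma measurableSet_setOf_bddBelow_range {X : Type*} [TopologicalSpace X] [SeparableSpace X]
    [MeasurableSpace C(X, ℝ)] [OpensMeasurableSpace C(X, ℝ)] :
    MeasurableSet {h : C(X, ℝ) | BddBelow (range h)} := by
  obtain ⟨s, hsc, hs⟩ := exists_countable_dense X
  have : {h : C(X, ℝ) | BddBelow (range h)} =
      ⋃ n : ℕ, ⋂ x ∈ s, {h | -(n : ℝ) ≤ h x} := by
    ext h
    simp only [mem_ofPred_eq, mem_iUnion, mem_iInter, BddBelow,
      ← hs.lowerBounds_image h.continuous]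
    constructor
    · rintro ⟨β, hβ⟩
      obtain ⟨n, hn⟩ := exists_nat_ge (-β)
      exact ⟨n, fun x hx => by linarith [hβ (mem_image_of_mem h hx)]⟩
    · rintro ⟨n, hn⟩
      exact ⟨-n, by rintro _ ⟨x, hx, rfl⟩; exact hn x hx⟩
  rw [this]
  exact .iUnion fun n => .biInter hsc fun x _ =>
    measurableSet_le measurable_const (continuous_eval_const x).measurable

section NearMinimizers

variable {X : Type*} {D : Set X}

def nearMinimizers (f : X → ℝ) (D : Set X) : Set X :=
  {x | x ∈ D ∧ f x ≤ sInf (f '' D) + 1}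

lemma nearMinimizers_subset {f : X → ℝ} : nearMinimizers f D ⊆ D := fun _ hx => hx.1

lemma nearMinimizers_nonempty (f : X → ℝ) (hD : D.Nonempty) :
    (nearMinimizers f D).Nonempty := by
  obtain ⟨_, ⟨x, hx, rfl⟩, hlt⟩ :=
    exists_lt_of_csInf_lt (hD.image f) (lt_add_one (sInf (f '' D)))
  exact ⟨x, hx, hlt.le⟩

lemma measurableSet_mem_nearMinimizers {Ω : Type*} [MeasurableSpace Ω] {f : Ω → X → ℝ}
    (hf : ∀ x, Measurable (f · x)) (hD : D.Countable) (x : X) :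
    MeasurableSet {ω | x ∈ nearMinimizers (f ω) D} := by
  have : Countable D := hD.to_subtype
  have hinf : Measurable fun ω => sInf (f ω '' D) := by
    simp_rw [sInf_image']
    exact .iInf fun d => hf d
  exact (MeasurableSet.const _).inter (measurableSet_le (hf x) (hinf.add_const 1))

end NearMinimizers

section Horofunctions

variable {X : Type*} [MetricSpace X] {x₀ : X} {h : C(X, ℝ)}

/-- The exponential of a horofunction inherits the midpoint inequality from `cosh ∘ dist`:
it is a limit of `exp (dist · x - dist x₀ x)`, and `cosh t ≤ exp t ≤ 2 cosh t` for `t ≥ 0`. -/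
lemma exp_mul_cosh_le_of_mem_horoSet {a c m : X}
    (hm : ∀ b, cosh (dist b m) * cosh (dist a c / 2) ≤ (cosh (dist a b) + cosh (dist c b)) / 2)
    (hh : h ∈ HoroSet x₀) : exp (h m) * cosh (dist a c / 2) ≤ exp (h a) + exp (h c) := by
  refine closure_minimal (s := range (iotaMap x₀))
    (t := {h : C(X, ℝ) | exp (h m) * cosh (dist a c / 2) ≤ exp (h a) + exp (h c)}) ?_
    (isClosed_le (by fun_prop) (by fun_prop)) hh
  rintro _ ⟨x, rfl⟩
  have hexp_le : ∀ t, exp t ≤ 2 * cosh t := fun t => by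
    rw [cosh_eq]
    linarith [exp_pos (-t)]
  have hcosh_le : ∀ t, 0 ≤ t → cosh t ≤ exp t := fun t ht => by
    rw [cosh_eq]
    linarith [exp_le_exp.2 (by linarith : -t ≤ t)]
  have key : exp (dist m x) * cosh (dist a c / 2) ≤ exp (dist a x) + exp (dist c x) := by
    have := hm x
    rw [dist_comm x m] at this
    nlinarith [hexp_le (dist m x), hcosh_le _ (dist_nonneg (x := a) (y := x)),
      hcosh_le _ (dist_nonneg (x := c) (y := x)), cosh_pos (dist a c / 2)]
  simp only [mem_ofPred_eq, iotaMap, ContinuousMap.coe_mk, exp_sub]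
  rw [div_mul_eq_mul_div, ← add_div]
  exact div_le_div_of_nonneg_right key (exp_pos _).le

lemma HasCoshMidpoints.isBounded_setOf_le_of_mem_horoSet (hX : HasCoshMidpoints X)
    (hh : h ∈ HoroSet x₀) (hbdd : BddBelow (range h)) (J : ℝ) :
    IsBounded {x | h x ≤ J} := by
  obtain ⟨β, hβ⟩ := hbdd
  rw [Metric.isBounded_iff]
  refine ⟨2 * arcosh (2 * exp (J - β)), fun x hx y hy => ?_⟩
  obtain ⟨m, hm⟩ := hX x y
  have hmid := exp_mul_cosh_le_of_mem_horoSet hm hh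
  have hβm : exp β ≤ exp (h m) := exp_le_exp.2 (hβ (mem_range_self m))
  have hcosh : cosh (dist x y / 2) ≤ 2 * exp (J - β) := by
    rw [exp_sub, mul_div_assoc', le_div_iff₀ (exp_pos β)]
    nlinarith [exp_le_exp.2 hx, exp_le_exp.2 hy, cosh_pos (dist x y / 2)]
  linarith [le_arcosh_of_cosh_le (by positivity) hcosh]

lemma HasCoshMidpoints.isBounded_nearMinimizers (hX : HasCoshMidpoints X) (hh : h ∈ HoroSet x₀)
    (hbdd : BddBelow (range h)) (D : Set X) : IsBounded (nearMinimizers h D) :=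
  (hX.isBounded_setOf_le_of_mem_horoSet hh hbdd _).subset fun _ hx => hx.2

end Horofunctions

section HoroAction

variable {X G : Type*} [Group G] {g : G}

section Topological

variable [TopologicalSpace X] [MulAction G X] [ContinuousConstSMul G X]

noncomputable def horoAct (x₀ : X) (g : G) (h : C(X, ℝ)) : C(X, ℝ) :=
  h.comp ⟨(g⁻¹ • ·), continuous_const_smul _⟩ - .const X (h (g⁻¹ • x₀))

variable {x₀ : X} {h : C(X, ℝ)}

@[simp]
lemma horoAct_apply (x : X) : horoAct x₀ g h x = h (g⁻¹ • x) - h (g⁻¹ • x₀) := rfl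

lemma continuous_horoAct : Continuous (horoAct x₀ g) :=
  (ContinuousMap.continuous_precomp _).sub
    (ContinuousMap.continuous_const'.comp (continuous_eval_const _))

lemma bddBelow_range_horoAct_iff : BddBelow (range (horoAct x₀ g h)) ↔ BddBelow (range h) := by
  have : range (horoAct x₀ g h) = OrderIso.subRight (h (g⁻¹ • x₀)) '' range h := by
    rw [← range_comp]
    exact (MulAction.surjective g⁻¹).range_comp (fun x => h x - h (g⁻¹ • x₀))
  rw [this, OrderIso.bddBelow_image]

lemma nearMinimizers_horoAct {D : Set X} (hD : g • D = D) (hne : D.Nonempty)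
    (hbdd : BddBelow (h '' D)) :
    nearMinimizers (horoAct x₀ g h) D = g • nearMinimizers h D := by
  have hmem : ∀ x, x ∈ D ↔ g⁻¹ • x ∈ D := fun x => by
    conv_lhs => rw [← hD]
    exact mem_smul_set_iff_inv_smul_mem
  have himage : horoAct x₀ g h '' D = OrderIso.subRight (h (g⁻¹ • x₀)) '' (h '' D) := by
    rw [image_image]
    conv_lhs => rw [← hD, ← image_smul, image_image]
    simp
  have hsInf : sInf (horoAct x₀ g h '' D) = sInf (h '' D) - h (g⁻¹ • x₀) := by
    rw [himage, ← OrderIso.map_csInf' _ (hne.image h) hbdd]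
    rfl
  ext x
  rw [mem_smul_set_iff_inv_smul_mem]
  simp only [nearMinimizers, mem_ofPred_eq, horoAct_apply, hsInf]
  exact and_congr (hmem x) ⟨fun hle => by linarith, fun hle => by linarith⟩

end Topological

variable [MetricSpace X] [MulAction G X] [IsIsometricSMul G X] {x₀ : X} {h : C(X, ℝ)}

lemma horoAct_iotaMap (x : X) : horoAct x₀ g (iotaMap x₀ x) = iotaMap x₀ (g • x) := by
  ext z
  rw [horoAct_apply]
  simp only [iotaMap, ContinuousMap.coe_mk]
  rw [← dist_smul g (g⁻¹ • z), ← dist_smul g (g⁻¹ • x₀), smul_inv_smul,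
    smul_inv_smul]
  ring

lemma horoAct_mem_horoSet (hh : h ∈ HoroSet x₀) : horoAct x₀ g h ∈ HoroSet x₀ :=
  map_mem_closure continuous_horoAct hh <| by
    rintro _ ⟨x, rfl⟩
    exact ⟨g • x, (horoAct_iotaMap x).symm⟩

lemma HasCoshMidpoints.circumcenter_nearMinimizers_horoAct [CompleteSpace X] [Nonempty X]
    (hX : HasCoshMidpoints X) (hh : h ∈ HoroSet x₀) (hbdd : BddBelow (range h)) {D : Set X}
    (hD : g • D = D) (hne : D.Nonempty) :
    circumcenter (nearMinimizers (horoAct x₀ g h) D) =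
      g • circumcenter (nearMinimizers h D) := by
  rw [nearMinimizers_horoAct hD hne (hbdd.mono (image_subset_range _ _)), ← image_smul]
  exact hX.circumcenter_image_isometryEquiv (nearMinimizers_nonempty h hne)
    (hX.isBounded_nearMinimizers hh hbdd D) (IsometryEquiv.constSMul g)

end HoroAction

theorem stmt18_general {X : Type*} [MetricSpace X] [CompleteSpace X] [Nonempty X]
    [TopologicalSpace.SeparableSpace X]
    (hX : IsCATMinusOne X)
    {G : Type*} [Group G] [Countable G] [MulAction G X]
    (hiso : ∀ g : G, Isometry (fun x : X => g • x))
    (x₀ : X) :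
    ∃ act : G → C(X, ℝ) → C(X, ℝ),
      (∀ (g : G) (h : C(X, ℝ)) (x : X), act g h x = h (g⁻¹ • x) - h (g⁻¹ • x₀)) ∧
      -- the action preserves the horofunction compactification
      (∀ g : G, ∀ h ∈ HoroSet x₀, act g h ∈ HoroSet x₀) ∧
      -- the set of bounded-below horofunctions is Borel ...
      (@MeasurableSet C(X, ℝ) (borel C(X, ℝ))
        {h : C(X, ℝ) | h ∈ HoroSet x₀ ∧ BddBelow (Set.range (h : X → ℝ))}) ∧
      -- ... and G-invariant, so the partition into bounded and unbounded parts is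
      -- Borel and G-invariant
      (∀ g : G, ∀ h ∈ HoroSet x₀,
        (BddBelow (Set.range (h : X → ℝ)) ↔ BddBelow (Set.range (act g h : X → ℝ)))) ∧
      -- the circumcenter map on the bounded part is Borel ...
      (@Measurable {h : C(X, ℝ) // h ∈ HoroSet x₀ ∧ BddBelow (Set.range (h : X → ℝ))} X
        (MeasurableSpace.comap Subtype.val (borel C(X, ℝ))) (borel X)
        (fun h => circumcenter {x : X | x ∈ MulAction.orbit G x₀ ∧
          (h : C(X, ℝ)) x ≤ sInf ((h : C(X, ℝ)) '' MulAction.orbit G x₀) + 1})) ∧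
      -- ... and G-equivariant
      (∀ g : G, ∀ h ∈ HoroSet x₀, BddBelow (Set.range (h : X → ℝ)) →
        circumcenter {x : X | x ∈ MulAction.orbit G x₀ ∧
            (act g h) x ≤ sInf ((act g h : X → ℝ) '' MulAction.orbit G x₀) + 1} =
          g • circumcenter {x : X | x ∈ MulAction.orbit G x₀ ∧
            h x ≤ sInf ((h : X → ℝ) '' MulAction.orbit G x₀) + 1}) := by
  have : IsIsometricSMul G X := ⟨hiso⟩
  have hmid := hX.hasCoshMidpoints
  have horbit : (MulAction.orbit G x₀).Nonempty := ⟨x₀, MulAction.mem_orbit_self x₀⟩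
  refine ⟨horoAct x₀, fun _ _ _ => rfl, fun _ _ => horoAct_mem_horoSet, ?_,
    fun _ _ _ => bddBelow_range_horoAct_iff.symm, ?_, fun g _ hh hbdd =>
      hmid.circumcenter_nearMinimizers_horoAct hh hbdd (MulAction.smul_orbit g x₀) horbit⟩
  · borelize C(X, ℝ)
    exact isClosed_closure.measurableSet.inter measurableSet_setOf_bddBelow_range
  · borelize C(X, ℝ) X
    have hne (h : C(X, ℝ)) := nearMinimizers_nonempty h horbit
    have hbd {h : C(X, ℝ)} (hh : h ∈ HoroSet x₀) (hb : BddBelow (range h)) :=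
      hmid.isBounded_nearMinimizers hh hb (MulAction.orbit G x₀)
    refine hmid.measurable_circumcenter (fun h => hne h) (fun h => hbd h.2.1 h.2.2) ?_
    exact measurable_supDist_of_subset_countable (countable_range _)
      (fun _ => nearMinimizers_subset) (fun d _ => measurableSet_mem_nearMinimizers
        (fun x => (continuous_eval_const x).measurable.comp measurable_subtype_coe)
        (countable_range _) d)
      (fun h => hne h) (fun h => hbd h.2.1 h.2.2)

/-- Proposition 3.4: for a countable group `G` acting discretely by isometries on a
complete separable CAT(-1) space `X`, the horofunction compactification splits into a
Borel `G`-invariant partition into horofunctions bounded from below and unbounded from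
below, and on the bounded part the map sending `h` to the circumcenter of
`{d ∈ G·x₀ : h(d) ≤ inf_{G·x₀} h + 1}` is Borel and `G`-equivariant.  Here the
`G`-action on horofunctions is `(g·h)(x) = h(g⁻¹x) − h(g⁻¹x₀)`. -/
theorem stmt18 {X : Type*} [MetricSpace X] [CompleteSpace X] [Nonempty X]
    [TopologicalSpace.SeparableSpace X]
    (hX : IsCATMinusOne X)
    {G : Type*} [Group G] [Countable G] [MulAction G X]
    (hiso : ∀ g : G, Isometry (fun x : X => g • x))
    (hdisc : ∀ x : X, DiscreteTopology (MulAction.orbit G x))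
    (x₀ : X) :
    ∃ act : G → C(X, ℝ) → C(X, ℝ),
      (∀ (g : G) (h : C(X, ℝ)) (x : X), act g h x = h (g⁻¹ • x) - h (g⁻¹ • x₀)) ∧
      -- the action preserves the horofunction compactification
      (∀ g : G, ∀ h ∈ HoroSet x₀, act g h ∈ HoroSet x₀) ∧
      -- the set of bounded-below horofunctions is Borel ...
      (@MeasurableSet C(X, ℝ) (borel C(X, ℝ))
        {h : C(X, ℝ) | h ∈ HoroSet x₀ ∧ BddBelow (Set.range (h : X → ℝ))}) ∧
      -- ... and G-invariant, so the partition into bounded and unbounded parts is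
      -- Borel and G-invariant
      (∀ g : G, ∀ h ∈ HoroSet x₀,
        (BddBelow (Set.range (h : X → ℝ)) ↔ BddBelow (Set.range (act g h : X → ℝ)))) ∧
      -- the circumcenter map on the bounded part is Borel ...
      (@Measurable {h : C(X, ℝ) // h ∈ HoroSet x₀ ∧ BddBelow (Set.range (h : X → ℝ))} X
        (MeasurableSpace.comap Subtype.val (borel C(X, ℝ))) (borel X)
        (fun h => circumcenter {x : X | x ∈ MulAction.orbit G x₀ ∧
          (h : C(X, ℝ)) x ≤ sInf ((h : C(X, ℝ)) '' MulAction.orbit G x₀) + 1})) ∧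
      -- ... and G-equivariant
      (∀ g : G, ∀ h ∈ HoroSet x₀, BddBelow (Set.range (h : X → ℝ)) →
        circumcenter {x : X | x ∈ MulAction.orbit G x₀ ∧
            (act g h) x ≤ sInf ((act g h : X → ℝ) '' MulAction.orbit G x₀) + 1} =
          g • circumcenter {x : X | x ∈ MulAction.orbit G x₀ ∧
            h x ≤ sInf ((h : X → ℝ) '' MulAction.orbit G x₀) + 1}) :=
  stmt18_general hX hiso x₀
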